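/- Let A be a unital C*-algebra, and let p, q be self-adjoint elements with ‖p² − p‖ < 1/8, ‖q² − q‖ < 1/8, and ‖p − q‖ < 1/10. Let P and Q be the projections obtained from p and q respectively by applying the characteristic-type continuous function h which is 0 on (−∞,1/4] and 1 on [3/4,∞) via functional calculus. Then ‖P − Q‖ < 1, and consequently P and Q are unitarily equivalent. -/
import Mathlib

open StarAlgebra in

lemma my_commute_cfc_complex {A : Type*} [CStarAlgebra A] {x b : A}
    (hx1 : Commute x b) (hx2 : Commute (star x) b) (f : ℂ → ℂ) :
    Commute x (cfc f b) := by
  have hcent : IsClosed ((StarSubalgebra.centralizer ℂ {x} : StarSubalgebra ℂ A) : Set A) := by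
    rw [StarSubalgebra.coe_centralizer]
    have : (({x} ∪ star {x} : Set A).centralizer)
        = ⋂ m ∈ ({x} ∪ star {x} : Set A), {c | m * c = c * m} := by
      ext c; simp [Set.mem_centralizer_iff]
    rw [this]
    exact isClosed_biInter fun m _ => isClosed_eq (by fun_prop) (by fun_prop)
  have hbmem : b ∈ StarSubalgebra.centralizer ℂ {x} := by
    rw [StarSubalgebra.mem_centralizer_iff]
    rintro g rfl
    exact ⟨hx1.eq, hx2.eq⟩
  have hle : elemental ℂ b ≤ StarSubalgebra.centralizer ℂ {x} :=
    elemental.le_of_mem hcent hbmem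
  have hmem : cfc f b ∈ elemental ℂ b := by
    refine cfc_cases (fun y => y ∈ elemental ℂ b) b f (zero_mem _) fun hf hb => ?_
    rw [cfcHom_eq_of_isStarNormal]
    exact SetLike.coe_mem _
  exact (StarSubalgebra.mem_centralizer_iff ℂ |>.mp (hle hmem) x rfl).1

lemma my_commute_cfc {A : Type*} [CStarAlgebra A] {x b : A} (hb : IsSelfAdjoint b)
    (hx1 : Commute x b) (hx2 : Commute (star x) b) (g : ℝ → ℝ) :
    Commute x (cfc g b) := by
  rw [cfc_real_eq_complex g hb]
  exact my_commute_cfc_complex hx1 hx2 _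

lemma my_inv_sqrt {A : Type*} [CStarAlgebra A] {b : A} (hbsa : IsSelfAdjoint b) {c : ℝ} (hc : 0 < c)
    (hspec : ∀ t ∈ spectrum ℝ b, c ≤ t) :
    ∃ s : A, IsSelfAdjoint s ∧ s * s * b = 1 ∧ b * (s * s) = 1 ∧ s * b = b * s ∧
      ∀ x : A, Commute x b → Commute (star x) b → Commute x s := by
  set g : ℝ → ℝ := fun x => (Real.sqrt x)⁻¹ with hg
  have hgc : ContinuousOn g (spectrum ℝ b) := by
    apply ContinuousOn.inv₀
    · exact Real.continuous_sqrt.continuousOn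
    · intro x hx
      have h0 : 0 < x := hc.trans_le (hspec x hx)
      exact ne_of_gt (Real.sqrt_pos.mpr h0)
  have key : cfc g b * cfc g b * b = 1 := by
    have h1 : cfc g b * cfc g b = cfc (fun x => g x * g x) b := (cfc_mul g g b).symm
    have h2 : cfc (fun x => g x * g x) b * b = cfc (fun x => g x * g x * x) b := by
      calc cfc (fun x => g x * g x) b * b
          = cfc (fun x => g x * g x) b * cfc (fun x : ℝ => x) b := by rw [cfc_id' ℝ b]
        _ = cfc (fun x => g x * g x * x) b := (cfc_mul _ _ b).symm
    rw [h1, h2]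
    have h3 : cfc (fun x => g x * g x * x) b = cfc (fun _ : ℝ => (1:ℝ)) b := by
      apply cfc_congr
      intro x hx
      have hx0 : 0 < x := hc.trans_le (hspec x hx)
      simp only [hg]
      rw [← mul_inv, Real.mul_self_sqrt hx0.le]
      exact inv_mul_cancel₀ (ne_of_gt hx0)
    rw [h3, cfc_const_one ℝ b]
  have hsb : cfc g b * b = b * cfc g b := by
    have := cfc_commute_cfc g (fun x : ℝ => x) b
    rw [cfc_id' ℝ b] at this
    exact this.eq
  refine ⟨cfc g b, cfc_predicate g b, key, ?_, hsb, ?_⟩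
  · calc b * (cfc g b * cfc g b) = (b * cfc g b) * cfc g b := by rw [mul_assoc]
      _ = (cfc g b * b) * cfc g b := by rw [hsb]
      _ = cfc g b * (b * cfc g b) := by rw [mul_assoc]
      _ = cfc g b * (cfc g b * b) := by rw [hsb]
      _ = 1 := by rw [← mul_assoc, key]
  · exact fun x hx1 hx2 => my_commute_cfc hbsa hx1 hx2 g

lemma my_unitary_of_close_projections {A : Type*} [CStarAlgebra A] {e f : A}
    (he : IsSelfAdjoint e) (hf : IsSelfAdjoint f)
    (he2 : e * e = e) (hf2 : f * f = f) (hef : ‖e - f‖ < 1) :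
    ∃ u : A, u * star u = 1 ∧ star u * u = 1 ∧ u * e * star u = f := by
  rcases subsingleton_or_nontrivial A with hA | hA
  · exact ⟨1, Subsingleton.elim _ _, Subsingleton.elim _ _, Subsingleton.elim _ _⟩
  set v := f * e + (1 - f) * (1 - e) with hv
  set b := 1 - (e - f) * (e - f) with hb
  have hdsa : IsSelfAdjoint (e - f) := he.sub hf
  have hbsa : IsSelfAdjoint b := by
    rw [hb, IsSelfAdjoint, star_sub, star_one, star_mul, hdsa.star_eq]
  have hvstar : star v = e * f + (1 - e) * (1 - f) := by
    simp [hv, star_mul, he.star_eq, hf.star_eq]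
  have hfF : f * (1 - f) = 0 := by simp [mul_sub, hf2]
  have hFf : (1 - f) * f = 0 := by simp [sub_mul, hf2]
  have heE : e * (1 - e) = 0 := by simp [mul_sub, he2]
  have hEe : (1 - e) * e = 0 := by simp [sub_mul, he2]
  have hb1 : star v * v = b := by
    rw [hvstar, hv]
    have expand : (e * f + (1 - e) * (1 - f)) * (f * e + (1 - f) * (1 - e))
        = e * (f * f) * e + (e * (f * (1 - f))) * (1 - e)
          + ((1 - e) * ((1 - f) * f)) * e + (1 - e) * ((1 - f) * (1 - f)) * (1 - e) := by
      noncomm_ring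
    have hFF : (1 - f) * (1 - f) = 1 - f := by simp [sub_mul, mul_sub, hf2]
    rw [expand, hfF, hFf, hf2, hFF, hb]
    simp only [mul_zero, zero_mul, add_zero, zero_add]
    have lhs : e * f * e + (1 - e) * (1 - f) * (1 - e)
        = 1 - e - f + e * f + f * e := by
      simp only [sub_mul, mul_sub, one_mul, mul_one, he2]
      abel
    have rhs : 1 - (e - f) * (e - f) = 1 - e - f + e * f + f * e := by
      simp only [sub_mul, mul_sub, he2, hf2]
      abel
    rw [lhs, rhs]
  have hb2 : v * star v = b := by
    rw [hvstar, hv]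
    have expand : (f * e + (1 - f) * (1 - e)) * (e * f + (1 - e) * (1 - f))
        = f * (e * e) * f + (f * (e * (1 - e))) * (1 - f)
          + ((1 - f) * ((1 - e) * e)) * f + (1 - f) * ((1 - e) * (1 - e)) * (1 - f) := by
      noncomm_ring
    have hEE : (1 - e) * (1 - e) = 1 - e := by simp [sub_mul, mul_sub, he2]
    rw [expand, heE, hEe, he2, hEE, hb]
    simp only [mul_zero, zero_mul, add_zero, zero_add]
    have lhs : f * e * f + (1 - f) * (1 - e) * (1 - f)
        = 1 - e - f + f * e + e * f := by
      simp only [sub_mul, mul_sub, one_mul, mul_one, hf2]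
      abel
    have rhs : 1 - (e - f) * (e - f) = 1 - e - f + f * e + e * f := by
      simp only [sub_mul, mul_sub, he2, hf2]
      abel
    rw [lhs, rhs]
  -- spectrum bound
  have hc : (0:ℝ) < 1 - ‖e - f‖ * ‖e - f‖ := by
    nlinarith [norm_nonneg (e - f)]
  have hspec : ∀ t ∈ spectrum ℝ b, 1 - ‖e - f‖ * ‖e - f‖ ≤ t := by
    intro t ht
    have h1 : (1 : ℝ) - t ∈ spectrum ℝ ((1 : A) - b) := by
      have := spectrum.singleton_sub_eq (R := ℝ) b 1
      rw [map_one] at this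
      rw [← this]
      exact Set.sub_mem_sub rfl ht
    have h2 : (1 : A) - b = (e - f) * (e - f) := by rw [hb]; noncomm_ring
    rw [h2] at h1
    have h3 : ‖(1 : ℝ) - t‖ ≤ ‖(e - f) * (e - f)‖ := spectrum.norm_le_norm_of_mem h1
    have h4 : ‖(e - f) * (e - f)‖ = ‖e - f‖ * ‖e - f‖ := by
      nth_rewrite 1 [← hdsa.star_eq]
      exact CStarRing.norm_star_mul_self
    rw [h4, Real.norm_eq_abs] at h3
    have := abs_le.mp h3
    linarith [this.2]
  obtain ⟨s, hssa, hs1, hs2, hsb, hscomm⟩ := my_inv_sqrt hbsa hc hspec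
  -- commutation of e with b
  have hdd : (e - f) * (e - f) = e - e * f - f * e + f := by
    have : (e - f) * (e - f) = e * e - e * f - f * e + f * f := by noncomm_ring
    rw [this, he2, hf2]
  have hcomm_eb : Commute e b := by
    have h5 : e * b = e * f * e := by
      rw [hb, hdd]
      simp only [mul_sub, mul_add, mul_one, ← mul_assoc, he2]
      abel
    have h6 : b * e = e * f * e := by
      rw [hb, hdd]
      simp only [sub_mul, add_mul, one_mul, mul_assoc, he2]
      abel
    rw [Commute, SemiconjBy, h5, h6]
  have hcomm_es : Commute e s := hscomm e hcomm_eb (by rwa [he.star_eq])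
  -- v e = f v
  have hve : v * e = f * v := by
    rw [hv]
    simp only [add_mul, mul_add]
    rw [mul_assoc (1-f) (1-e) e, hEe, mul_zero, ← mul_assoc f f e, hf2,
      ← mul_assoc f (1-f) (1-e), hfF, zero_mul, mul_assoc f e e, he2]
  -- v commutes with b
  have hcomm_vb : v * b = b * v := by
    calc v * b = v * (star v * v) := by rw [hb1]
      _ = (v * star v) * v := by rw [mul_assoc]
      _ = b * v := by rw [hb2]
  have hcomm_vss : v * (s * s) = (s * s) * v := by
    calc v * (s * s) = (s * s * b) * (v * (s * s)) := by rw [hs1, one_mul]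
      _ = (s * s) * (b * v) * (s * s) := by noncomm_ring
      _ = (s * s) * (v * b) * (s * s) := by rw [hcomm_vb]
      _ = (s * s) * v * (b * (s * s)) := by noncomm_ring
      _ = (s * s) * v := by rw [hs2, mul_one]
  refine ⟨v * s, ?_, ?_, ?_⟩
  · have hstar : star (v * s) = s * star v := by rw [star_mul, hssa.star_eq]
    rw [hstar]
    calc v * s * (s * star v) = v * (s * s) * star v := by noncomm_ring
      _ = (s * s) * v * star v := by rw [hcomm_vss]
      _ = (s * s) * b := by rw [mul_assoc, hb2]
      _ = 1 := hs1
  · have hstar : star (v * s) = s * star v := by rw [star_mul, hssa.star_eq]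
    rw [hstar]
    calc s * star v * (v * s) = s * (star v * v) * s := by noncomm_ring
      _ = s * b * s := by rw [hb1]
      _ = s * (b * s) := by rw [mul_assoc]
      _ = s * (s * b) := by rw [← hsb]
      _ = s * s * b := by rw [mul_assoc]
      _ = 1 := hs1
  · have hstar : star (v * s) = s * star v := by rw [star_mul, hssa.star_eq]
    rw [hstar]
    calc v * s * e * (s * star v) = v * (s * e) * (s * star v) := by noncomm_ring
      _ = v * (e * s) * (s * star v) := by rw [← hcomm_es.eq]
      _ = (v * e) * (s * s) * star v := by noncomm_ring
      _ = (f * v) * (s * s) * star v := by rw [hve]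
      _ = f * (v * (s * s)) * star v := by noncomm_ring
      _ = f * (s * s * v) * star v := by rw [hcomm_vss]
      _ = f * (s * s) * (v * star v) := by noncomm_ring
      _ = f * (s * s) * b := by rw [hb2]
      _ = f * (s * s * b) := by rw [mul_assoc]
      _ = f := by rw [hs1, mul_one]

lemma my_spec_bound {A : Type*} [CStarAlgebra A] [Nontrivial A] {p : A}
    (hp : IsSelfAdjoint p) (hp8 : ‖p * p - p‖ < 1 / 8) :
    ∀ t ∈ spectrum ℝ p, (-3/20 ≤ t ∧ t ≤ 3/20) ∨ (17/20 ≤ t ∧ t ≤ 23/20) := by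
  intro t ht
  have key : |t * t - t| < 1 / 8 := by
    have h1 : cfc (fun x : ℝ => x * x - x) p = p * p - p := by
      rw [cfc_sub (fun x : ℝ => x * x) (fun x : ℝ => x) p,
        cfc_mul (fun x : ℝ => x) (fun x : ℝ => x) p, cfc_id' ℝ p]
    have h2 : t * t - t ∈ spectrum ℝ (p * p - p) := by
      rw [← h1, cfc_map_spectrum (fun x : ℝ => x * x - x) p]
      exact ⟨t, ht, rfl⟩
    have h3 := spectrum.norm_le_norm_of_mem h2
    rw [Real.norm_eq_abs] at h3
    exact lt_of_le_of_lt h3 hp8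
  rw [abs_lt] at key
  rcases le_or_gt t (1/2) with hhalf | hhalf
  · left
    constructor
    · nlinarith [key.1, key.2]
    · nlinarith [key.1, key.2]
  · right
    constructor
    · nlinarith [key.1, key.2]
    · nlinarith [key.1, key.2]

/-- If `p`, `q` are self-adjoint with `‖p² − p‖ < 1/8`, `‖q² − q‖ < 1/8` and
`‖p − q‖ < 1/10`, and `h : ℝ → ℝ` is continuous with `h = 0` on `(−∞, 1/4]`
and `h = 1` on `[3/4, ∞)`, then the projections `P = h(p)` and `Q = h(q)`
obtained by functional calculus satisfy `‖P − Q‖ < 1`, and consequently they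
are unitarily equivalent. -/
theorem close_almost_projections_give_equivalent_projections
    {A : Type*} [CStarAlgebra A] (p q : A)
    (hp : IsSelfAdjoint p) (hq : IsSelfAdjoint q)
    (hp8 : ‖p * p - p‖ < 1 / 8) (hq8 : ‖q * q - q‖ < 1 / 8)
    (hpq : ‖p - q‖ < 1 / 10)
    (h : ℝ → ℝ) (hcont : Continuous h)
    (h0 : ∀ x : ℝ, x ≤ 1 / 4 → h x = 0)
    (h1 : ∀ x : ℝ, 3 / 4 ≤ x → h x = 1) :
    ‖cfc h p - cfc h q‖ < 1 ∧
      ∃ u : A, u * star u = 1 ∧ star u * u = 1 ∧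
        u * cfc h p * star u = cfc h q := by
  rcases subsingleton_or_nontrivial A with hA | hA
  · refine ⟨?_, 1, Subsingleton.elim _ _, Subsingleton.elim _ _, Subsingleton.elim _ _⟩
    rw [Subsingleton.elim (cfc h p - cfc h q) 0, norm_zero]
    norm_num
  have hvals : ∀ (r : A), IsSelfAdjoint r → ‖r * r - r‖ < 1 / 8 →
      (cfc h r * cfc h r = cfc h r ∧ ‖cfc h r - r‖ ≤ 3 / 20) := by
    intro r hr hr8
    have hsp := my_spec_bound hr hr8
    constructor
    · rw [← cfc_mul h h r]
      apply cfc_congr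
      intro t ht
      show h t * h t = h t
      rcases hsp t ht with ⟨_, h'⟩ | ⟨h', _⟩
      · rw [h0 t (by linarith)]; ring
      · rw [h1 t (by linarith)]; ring
    · have heq : cfc (fun x : ℝ => h x - x) r = cfc h r - r := by
        rw [cfc_sub h (fun x : ℝ => x) r, cfc_id' ℝ r]
      rw [← heq]
      apply norm_cfc_le (by norm_num)
      intro t ht
      rw [Real.norm_eq_abs, abs_le]
      rcases hsp t ht with ⟨hl, h'⟩ | ⟨h', hu⟩
      · rw [h0 t (by linarith)]
        constructor <;> linarith
      · rw [h1 t (by linarith)]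
        constructor <;> linarith
  obtain ⟨hP2, hPn⟩ := hvals p hp hp8
  obtain ⟨hQ2, hQn⟩ := hvals q hq hq8
  have hPsa : IsSelfAdjoint (cfc h p) := cfc_predicate h p
  have hQsa : IsSelfAdjoint (cfc h q) := cfc_predicate h q
  have hnorm : ‖cfc h p - cfc h q‖ ≤ 2 / 5 := by
    have hsplit : cfc h p - cfc h q = (cfc h p - p) + (p - q) + (q - cfc h q) := by abel
    rw [hsplit]
    have h3 := norm_add₃_le (a := cfc h p - p) (b := p - q) (c := q - cfc h q)
    have : ‖q - cfc h q‖ ≤ 3 / 20 := by rw [norm_sub_rev]; exact hQn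
    linarith
  have hlt : ‖cfc h p - cfc h q‖ < 1 := lt_of_le_of_lt hnorm (by norm_num)
  exact ⟨hlt, my_unitary_of_close_projections hPsa hQsa hP2 hQ2 hlt⟩
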